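/- Let d ≥ 1, n ≥ 1, σ > 0, and let δ_1, …, δ_n ∈ ℝ^d with mean δ̄ = (1/n)·Σ_{v=1}^n δ_v. For each u let P_u = N(δ_u, σ²I) be the isotropic Gaussian measure on ℝ^d with mean δ_u, and let P̄ = (1/n)·Σ_{v=1}^n P_v. Then (1/n)·Σ_{u=1}^n KL(P_u ‖ P̄) ≤ (1/σ²) · (1/n) · Σ_{u=1}^n ‖δ_u − δ̄‖². -/

import Mathlib

/-!
Since `log` is concave, `log p_u - log ((1/n) ∑ v, p_v) ≤ (1/n) ∑ v, (log p_u - log p_v)` pointwise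
for positive densities, so KL is convex in its second argument:
`KL(P_u ‖ P̄) ≤ (1/n) ∑ v, KL(P_u ‖ P_v)`. For isotropic Gaussians with a common variance,
`KL(N(a, σ²I) ‖ N(b, σ²I)) = ‖a - b‖² / (2σ²)`, and averaging over `u` leaves
`(1/(2n²σ²)) ∑ u, ∑ v, ‖δ_u - δ_v‖² = (1/(nσ²)) ∑ u, ‖δ_u - δ̄‖²`.
-/

open MeasureTheory ProbabilityTheory
open scoped ENNReal NNReal

/-- The isotropic Gaussian measure `N(a, σ²I)` on `ℝ^d`, i.e. the product over the `d`
coordinates of one-dimensional Gaussian measures with means `a i` and common variance `σ²`. -/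
noncomputable def gaussianPi {d : ℕ} (a : EuclideanSpace ℝ (Fin d)) (σ : ℝ) :
    Measure (EuclideanSpace ℝ (Fin d)) :=
  Measure.map (WithLp.toLp 2) (Measure.pi fun i => gaussianReal (a i) ((σ ^ 2).toNNReal))

open Classical in
/-- The Kullback–Leibler divergence `KL(μ‖ν) = ∫ log(dμ/dν) dμ` (valued in `ℝ≥0∞`),
defined when `μ ≪ ν` and the log-likelihood ratio is integrable, and `∞` otherwise. -/
noncomputable def klDiv {α : Type*} [MeasurableSpace α] (μ ν : Measure α) : ℝ≥0∞ :=
  if μ ≪ ν ∧ Integrable (llr μ ν) μ then ENNReal.ofReal (∫ x, llr μ ν x ∂μ) else ⊤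

open Real Finset RealInnerProductSpace

theorem MeasureTheory.lintegral_fin_nat_prod_eq_prod {n : ℕ} {E : Type*} [MeasurableSpace E]
    {μ : Fin n → Measure E} [∀ i, SigmaFinite (μ i)] {f : Fin n → E → ℝ≥0∞}
    (hf : ∀ i, Measurable (f i)) :
    ∫⁻ x, ∏ i, f i (x i) ∂Measure.pi μ = ∏ i, ∫⁻ x, f i x ∂μ i := by
  induction n with
  | zero => simp
  | succ n ih =>
    calc
      _ = ∫⁻ x : E × (Fin n → E), f 0 x.1 * ∏ i : Fin n, f i.succ (x.2 i)
            ∂(μ 0).prod (Measure.pi fun i ↦ μ i.succ) := by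
        rw [← ((measurePreserving_piFinSuccAbove μ 0).symm).lintegral_comp_emb
          (MeasurableEquiv.measurableEmbedding _)]
        simp_rw [MeasurableEquiv.piFinSuccAbove_symm_apply, Fin.insertNthEquiv,
          Fin.prod_univ_succ, Fin.insertNth_zero, Equiv.coe_fn_mk, Fin.cons_succ,
          Fin.zero_succAbove, cast_eq, Fin.cons_zero]
      _ = (∫⁻ x, f 0 x ∂μ 0) * ∏ i : Fin n, ∫⁻ x, f i.succ x ∂μ i.succ := by
        rw [lintegral_prod_mul (g := fun y : Fin n → E ↦ ∏ i, f i.succ (y i))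
          (hf 0).aemeasurable (Finset.measurable_prod _ fun i _ ↦
            (hf i.succ).comp (measurable_pi_apply i)).aemeasurable, ih fun i ↦ hf i.succ]
      _ = ∏ i, ∫⁻ x, f i x ∂μ i := (Fin.prod_univ_succ (fun i ↦ ∫⁻ x, f i x ∂μ i)).symm

theorem MeasureTheory.lintegral_fintype_prod_eq_prod {ι E : Type*} [Fintype ι]
    [MeasurableSpace E] {μ : ι → Measure E} [∀ i, SigmaFinite (μ i)] {f : ι → E → ℝ≥0∞}
    (hf : ∀ i, Measurable (f i)) :
    ∫⁻ x, ∏ i, f i (x i) ∂Measure.pi μ = ∏ i, ∫⁻ x, f i x ∂μ i := by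
  let e := (Fintype.equivFin ι).symm
  rw [← (measurePreserving_piCongrLeft μ e).lintegral_comp_emb
    (MeasurableEquiv.measurableEmbedding _)]
  simp_rw [← e.prod_comp, MeasurableEquiv.coe_piCongrLeft, Equiv.piCongrLeft_apply_apply]
  exact lintegral_fin_nat_prod_eq_prod fun i ↦ hf (e i)

theorem Set.indicator_univ_pi_prod {ι E M : Type*} [Fintype ι] [CommMonoidWithZero M]
    (s : ι → Set E) (f : ι → E → M) (x : ι → E) :
    (Set.univ.pi s).indicator (fun x ↦ ∏ i, f i (x i)) x = ∏ i, (s i).indicator (f i) (x i) := by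
  by_cases hx : x ∈ Set.univ.pi s
  · rw [Set.indicator_of_mem hx]
    exact Finset.prod_congr rfl fun i _ ↦ (Set.indicator_of_mem (hx i (Set.mem_univ i)) _).symm
  · obtain ⟨i, -, hi⟩ := not_forall₂.mp hx
    rw [Set.indicator_of_notMem hx,
      Finset.prod_eq_zero (Finset.mem_univ i) (Set.indicator_of_notMem hi _)]

theorem MeasureTheory.Measure.pi_eq_withDensity_prod {ι E : Type*} [Fintype ι]
    [MeasurableSpace E] {μ ν : ι → Measure E} [∀ i, SigmaFinite (μ i)] [∀ i, SigmaFinite (ν i)]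
    {f : ι → E → ℝ≥0∞} (hf : ∀ i, Measurable (f i)) (hν : ∀ i, ν i = (μ i).withDensity (f i)) :
    Measure.pi ν = (Measure.pi μ).withDensity fun x ↦ ∏ i, f i (x i) := by
  refine Measure.pi_eq (μ := ν) fun s hs ↦ ?_
  rw [withDensity_apply _ (.univ_pi hs), ← lintegral_indicator (.univ_pi hs)]
  simp_rw [Set.indicator_univ_pi_prod]
  rw [lintegral_fintype_prod_eq_prod fun i ↦ (hf i).indicator (hs i)]
  simp_rw [hν, withDensity_apply _ (hs _), lintegral_indicator (hs _)]

theorem MeasurableEquiv.map_withDensity {α β : Type*} [MeasurableSpace α] [MeasurableSpace β]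
    (e : α ≃ᵐ β) (μ : Measure α) (g : α → ℝ≥0∞) :
    (μ.withDensity g).map e = (μ.map e).withDensity (g ∘ e.symm) := by
  ext s hs
  rw [e.map_apply, withDensity_apply _ (e.measurable hs), withDensity_apply _ hs, e.restrict_map,
    lintegral_map_equiv]
  simp

section LogMean

variable {ι : Type*} [Fintype ι] [Nonempty ι] {p : ι → ℝ}

theorem Real.log_sub_log_mean_le (hp : ∀ i, 0 < p i) (u : ι) :
    log (p u) - log ((Fintype.card ι : ℝ)⁻¹ * ∑ v, p v) ≤
      (Fintype.card ι : ℝ)⁻¹ * ∑ v, (log (p u) - log (p v)) := by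
  have hn : (0 : ℝ) < Fintype.card ι := Nat.cast_pos.mpr Fintype.card_pos
  have hjensen := strictConcaveOn_log_Ioi.concaveOn.le_map_sum (t := univ)
    (w := fun _ ↦ (Fintype.card ι : ℝ)⁻¹) (p := p) (fun _ _ ↦ by positivity)
    (by simp [hn.ne']) (fun v _ ↦ hp v)
  simp only [smul_eq_mul, ← mul_sum] at hjensen
  rw [sum_sub_distrib, sum_const, card_univ, nsmul_eq_mul, mul_sub, ← mul_assoc,
    inv_mul_cancel₀ hn.ne', one_mul]
  linarith

theorem Real.abs_log_sub_log_mean_le (hp : ∀ i, 0 < p i) (u : ι) :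
    |log (p u) - log ((Fintype.card ι : ℝ)⁻¹ * ∑ v, p v)| ≤ ∑ v, |log (p u) - log (p v)| := by
  have hn : (0 : ℝ) < Fintype.card ι := Nat.cast_pos.mpr Fintype.card_pos
  have hmean_pos : 0 < (Fintype.card ι : ℝ)⁻¹ * ∑ v, p v :=
    mul_pos (inv_pos.mpr hn) (sum_pos (fun v _ ↦ hp v) univ_nonempty)
  obtain ⟨w, -, hw⟩ : ∃ w ∈ univ, (Fintype.card ι : ℝ)⁻¹ * ∑ v, p v ≤ p w := by
    refine exists_le_of_sum_le univ_nonempty ?_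
    rw [sum_const, card_univ, nsmul_eq_mul, ← mul_assoc, mul_inv_cancel₀ hn.ne', one_mul]
  have hsum_nonneg : 0 ≤ ∑ v, |log (p u) - log (p v)| := sum_nonneg fun v _ ↦ abs_nonneg _
  rw [abs_le]
  constructor
  · have := log_le_log hmean_pos hw
    have := single_le_sum (f := fun v ↦ |log (p u) - log (p v)|) (fun v _ ↦ abs_nonneg _)
      (mem_univ w)
    have := neg_abs_le (log (p u) - log (p w))
    linarith
  · calc log (p u) - log ((Fintype.card ι : ℝ)⁻¹ * ∑ v, p v)
        ≤ (Fintype.card ι : ℝ)⁻¹ * ∑ v, (log (p u) - log (p v)) := log_sub_log_mean_le hp u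
      _ ≤ (Fintype.card ι : ℝ)⁻¹ * ∑ v, |log (p u) - log (p v)| := by
        gcongr with v; exact le_abs_self _
      _ ≤ ∑ v, |log (p u) - log (p v)| :=
        mul_le_of_le_one_left hsum_nonneg
          (inv_le_one_of_one_le₀ (Nat.one_le_cast.mpr Fintype.card_pos))

end LogMean

section WithDensity

variable {α : Type*} [MeasurableSpace α] {Λ : Measure α}

theorem llr_withDensity_ofReal [SigmaFinite Λ] {f g : α → ℝ} (hf : Measurable f)
    (hg : Measurable g) (hf_pos : ∀ x, 0 < f x) (hg_pos : ∀ x, 0 < g x) :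
    llr (Λ.withDensity fun x ↦ ENNReal.ofReal (f x)) (Λ.withDensity fun x ↦ ENNReal.ofReal (g x))
      =ᵐ[Λ] fun x ↦ log (f x) - log (g x) := by
  have : SigmaFinite (Λ.withDensity fun x ↦ ENNReal.ofReal (f x)) :=
    SigmaFinite.withDensity_ofReal f
  filter_upwards [Measure.rnDeriv_withDensity_right (Λ.withDensity fun x ↦ ENNReal.ofReal (f x)) Λ
      hg.ennreal_ofReal.aemeasurable (ae_of_all _ fun x ↦ by simp [hg_pos x])
      (ae_of_all _ fun x ↦ ENNReal.ofReal_ne_top),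
    Measure.rnDeriv_withDensity Λ hf.ennreal_ofReal] with x hx hx'
  simp only [llr_def, hx, hx']
  rw [ENNReal.toReal_mul, ENNReal.toReal_inv, ENNReal.toReal_ofReal (hf_pos x).le,
    ENNReal.toReal_ofReal (hg_pos x).le,
    log_mul (inv_ne_zero (hg_pos x).ne') (hf_pos x).ne', log_inv]
  ring

theorem klDiv_withDensity_ofReal [SigmaFinite Λ] {f g : α → ℝ} (hf : Measurable f)
    (hg : Measurable g) (hf_pos : ∀ x, 0 < f x) (hg_pos : ∀ x, 0 < g x)
    (hint : Integrable (fun x ↦ log (f x) - log (g x))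
      (Λ.withDensity fun x ↦ ENNReal.ofReal (f x))) :
    klDiv (Λ.withDensity fun x ↦ ENNReal.ofReal (f x))
        (Λ.withDensity fun x ↦ ENNReal.ofReal (g x)) =
      ENNReal.ofReal (∫ x, log (f x) - log (g x) ∂Λ.withDensity fun x ↦ ENNReal.ofReal (f x)) := by
  have hf_ac : (Λ.withDensity fun x ↦ ENNReal.ofReal (f x)) ≪ Λ :=
    withDensity_absolutelyContinuous _ _
  have hac : (Λ.withDensity fun x ↦ ENNReal.ofReal (f x)) ≪
      Λ.withDensity fun x ↦ ENNReal.ofReal (g x) :=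
    hf_ac.trans (withDensity_absolutelyContinuous' hg.ennreal_ofReal.aemeasurable
      (ae_of_all _ fun x ↦ by simp [hg_pos x]))
  have hllr := hf_ac.ae_eq (llr_withDensity_ofReal hf hg hf_pos hg_pos)
  rw [klDiv, if_pos ⟨hac, hint.congr hllr.symm⟩, integral_congr_ae hllr]

theorem inv_card_smul_sum_withDensity_ofReal {ι : Type*} [Fintype ι] [Nonempty ι]
    {f : ι → α → ℝ} (hf : ∀ v, Measurable (f v)) (hf_nonneg : ∀ v x, 0 ≤ f v x) :
    (Fintype.card ι : ℝ≥0∞)⁻¹ • ∑ v, Λ.withDensity (fun x ↦ ENNReal.ofReal (f v x)) =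
      Λ.withDensity fun x ↦ ENNReal.ofReal ((Fintype.card ι : ℝ)⁻¹ * ∑ v, f v x) := by
  have hmeas : ∀ v, Measurable fun x ↦ ENNReal.ofReal (f v x) := fun v ↦ (hf v).ennreal_ofReal
  rw [← Measure.sum_fintype, ← withDensity_tsum hmeas, tsum_fintype, sum_fn,
    ← withDensity_smul _ (Finset.measurable_sum _ fun v _ ↦ hmeas v)]
  congr 1 with x
  rw [Pi.smul_apply, smul_eq_mul, ← ENNReal.ofReal_sum_of_nonneg fun v _ ↦ hf_nonneg v x,
    ENNReal.ofReal_mul (by positivity),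
    ENNReal.ofReal_inv_of_pos (Nat.cast_pos.mpr Fintype.card_pos), ENNReal.ofReal_natCast]

theorem klDiv_mixture_le [SigmaFinite Λ] {ι : Type*} [Fintype ι] [Nonempty ι]
    {f : ι → α → ℝ} (hf : ∀ v, Measurable (f v)) (hf_pos : ∀ v x, 0 < f v x)
    {μ : ι → Measure α} (hμ : ∀ v, μ v = Λ.withDensity fun x ↦ ENNReal.ofReal (f v x)) (u : ι)
    (hint : ∀ v, Integrable (fun x ↦ log (f u x) - log (f v x)) (μ u)) :
    klDiv (μ u) ((Fintype.card ι : ℝ≥0∞)⁻¹ • ∑ v, μ v) ≤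
      (Fintype.card ι : ℝ≥0∞)⁻¹ * ∑ v, klDiv (μ u) (μ v) := by
  obtain rfl : μ = fun v ↦ Λ.withDensity fun x ↦ ENNReal.ofReal (f v x) := funext hμ
  beta_reduce at hint ⊢
  set μu := Λ.withDensity fun x ↦ ENNReal.ofReal (f u x)
  have hn : (0 : ℝ) < Fintype.card ι := Nat.cast_pos.mpr Fintype.card_pos
  set mean : α → ℝ := fun x ↦ (Fintype.card ι : ℝ)⁻¹ * ∑ v, f v x
  have hmean_meas : Measurable mean := (Finset.measurable_sum _ fun v _ ↦ hf v).const_mul _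
  have hmean_pos : ∀ x, 0 < mean x := fun x ↦
    mul_pos (inv_pos.mpr hn) (sum_pos (fun v _ ↦ hf_pos v x) univ_nonempty)
  have hint_mean : Integrable (fun x ↦ log (f u x) - log (mean x)) μu :=
    (integrable_finsetSum _ fun v _ ↦ (hint v).abs).mono'
      ((hf u).log.sub hmean_meas.log).aestronglyMeasurable
      (ae_of_all _ fun x ↦ abs_log_sub_log_mean_le (fun v ↦ hf_pos v x) u)
  rw [inv_card_smul_sum_withDensity_ofReal hf fun v x ↦ (hf_pos v x).le,
    klDiv_withDensity_ofReal (hf u) hmean_meas (hf_pos u) hmean_pos hint_mean,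
    sum_congr rfl fun v _ ↦
      klDiv_withDensity_ofReal (hf u) (hf v) (hf_pos u) (hf_pos v) (hint v)]
  calc ENNReal.ofReal (∫ x, log (f u x) - log (mean x) ∂μu)
      ≤ ENNReal.ofReal ((Fintype.card ι : ℝ)⁻¹ * ∑ v, ∫ x, log (f u x) - log (f v x) ∂μu) := by
        rw [← integral_finsetSum _ fun v _ ↦ hint v, ← integral_const_mul]
        exact ENNReal.ofReal_le_ofReal (integral_mono hint_mean
          ((integrable_finsetSum _ fun v _ ↦ hint v).const_mul _)
          fun x ↦ log_sub_log_mean_le (fun v ↦ hf_pos v x) u)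
    _ ≤ (Fintype.card ι : ℝ≥0∞)⁻¹ *
          ∑ v, ENNReal.ofReal (∫ x, log (f u x) - log (f v x) ∂μu) := by
        rw [ENNReal.ofReal_mul (inv_nonneg.mpr hn.le), ENNReal.ofReal_inv_of_pos hn,
          ENNReal.ofReal_natCast]
        gcongr
        exact le_sum_of_subadditive _ ENNReal.ofReal_zero.le (fun _ _ ↦ ENNReal.ofReal_add_le) _ _

end WithDensity

theorem EuclideanSpace.inner_sub_eq_sum {ι : Type*} [Fintype ι] (a c x : EuclideanSpace ℝ ι) :
    ⟪x - a, c⟫ = ∑ i, c i * (x i - a i) := by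
  simp [PiLp.inner_apply]

section GaussianPi

variable {d : ℕ} {σ : ℝ}

noncomputable def gaussianPiPDF (a : EuclideanSpace ℝ (Fin d)) (σ : ℝ)
    (x : EuclideanSpace ℝ (Fin d)) : ℝ :=
  ∏ i, gaussianPDFReal (a i) (σ ^ 2).toNNReal (x i)

theorem gaussianPiPDF_pos (hσ : σ ≠ 0) (a x : EuclideanSpace ℝ (Fin d)) :
    0 < gaussianPiPDF a σ x :=
  prod_pos fun _ _ ↦ gaussianPDFReal_pos _ _ _ (by simpa using hσ)

theorem measurable_gaussianPiPDF (a : EuclideanSpace ℝ (Fin d)) (σ : ℝ) :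
    Measurable (gaussianPiPDF a σ) := by
  unfold gaussianPiPDF; fun_prop

theorem gaussianPi_eq_withDensity (hσ : σ ≠ 0) (a : EuclideanSpace ℝ (Fin d)) :
    gaussianPi a σ = volume.withDensity fun x ↦ ENNReal.ofReal (gaussianPiPDF a σ x) := by
  rw [gaussianPi, Measure.pi_eq_withDensity_prod (fun i ↦ measurable_gaussianPDF _ _)
      (fun i ↦ gaussianReal_of_var_ne_zero _ (by simpa using hσ)),
    ← volume_pi, ← (PiLp.volume_preserving_toLp (Fin d)).map_eq]
  refine ((MeasurableEquiv.toLp 2 (Fin d → ℝ)).map_withDensity _ _).trans ?_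
  congr 1 with x
  exact (ENNReal.ofReal_prod_of_nonneg fun i _ ↦ gaussianPDFReal_nonneg _ _ _).symm

theorem log_gaussianPiPDF_sub_log_gaussianPiPDF (hσ : σ ≠ 0) (a b x : EuclideanSpace ℝ (Fin d)) :
    log (gaussianPiPDF a σ x) - log (gaussianPiPDF b σ x) =
      (2 * ⟪x - a, a - b⟫ + ‖a - b‖ ^ 2) / (2 * σ ^ 2) := by
  have hv : ((σ ^ 2).toNNReal : ℝ) = σ ^ 2 := Real.coe_toNNReal _ (sq_nonneg σ)
  have hlog : ∀ m y, log (gaussianPDFReal m (σ ^ 2).toNNReal y) =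
      log (√(2 * π * σ ^ 2))⁻¹ - (y - m) ^ 2 / (2 * σ ^ 2) := fun m y ↦ by
    rw [gaussianPDFReal, log_mul (by positivity) (exp_pos _).ne', log_exp, hv]
    ring
  have hnorms : log (gaussianPiPDF a σ x) - log (gaussianPiPDF b σ x) =
      (‖x - b‖ ^ 2 - ‖x - a‖ ^ 2) / (2 * σ ^ 2) := by
    rw [gaussianPiPDF, gaussianPiPDF,
      log_prod fun _ _ ↦ (gaussianPDFReal_pos _ _ _ (by simpa using hσ)).ne',
      log_prod fun _ _ ↦ (gaussianPDFReal_pos _ _ _ (by simpa using hσ)).ne',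
      EuclideanSpace.real_norm_sq_eq, EuclideanSpace.real_norm_sq_eq, ← sum_sub_distrib,
      ← sum_sub_distrib, sum_div]
    simp_rw [hlog, PiLp.sub_apply]
    exact sum_congr rfl fun i _ ↦ by ring
  rw [hnorms, show x - b = (x - a) + (a - b) by abel, norm_add_sq_real]
  ring

instance (a : EuclideanSpace ℝ (Fin d)) (σ : ℝ) : IsProbabilityMeasure (gaussianPi a σ) :=
  Measure.isProbabilityMeasure_map (by fun_prop)

theorem measurePreserving_eval_gaussianPi (a : EuclideanSpace ℝ (Fin d)) (σ : ℝ) (i : Fin d) :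
    MeasurePreserving (fun x : EuclideanSpace ℝ (Fin d) ↦ x i) (gaussianPi a σ)
      (gaussianReal (a i) (σ ^ 2).toNNReal) :=
  (measurePreserving_eval _ i).comp
    (MeasurePreserving.symm (MeasurableEquiv.toLp 2 (Fin d → ℝ)) ⟨by fun_prop, rfl⟩)

theorem integrable_eval_gaussianPi (a : EuclideanSpace ℝ (Fin d)) (σ : ℝ) (i : Fin d) :
    Integrable (fun x : EuclideanSpace ℝ (Fin d) ↦ x i) (gaussianPi a σ) :=
  (measurePreserving_eval_gaussianPi a σ i).integrable_comp_of_integrable (g := id)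
    ((memLp_id_gaussianReal 1).integrable le_rfl)

theorem integral_eval_gaussianPi (a : EuclideanSpace ℝ (Fin d)) (σ : ℝ) (i : Fin d) :
    ∫ x, x i ∂gaussianPi a σ = a i := by
  have h := measurePreserving_eval_gaussianPi a σ i
  rw [← integral_id_gaussianReal (μ := a i), ← h.map_eq]
  exact (integral_map h.measurable.aemeasurable aestronglyMeasurable_id).symm

theorem integrable_inner_sub_gaussianPi (a c : EuclideanSpace ℝ (Fin d)) (σ : ℝ) :
    Integrable (fun x ↦ ⟪x - a, c⟫) (gaussianPi a σ) := by
  simp_rw [EuclideanSpace.inner_sub_eq_sum]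
  exact integrable_finsetSum _ fun i _ ↦
    ((integrable_eval_gaussianPi a σ i).sub (integrable_const _)).const_mul _

theorem integral_inner_sub_gaussianPi (a c : EuclideanSpace ℝ (Fin d)) (σ : ℝ) :
    ∫ x, ⟪x - a, c⟫ ∂gaussianPi a σ = 0 := by
  have hint : ∀ i, Integrable (fun x : EuclideanSpace ℝ (Fin d) ↦ x i - a i) (gaussianPi a σ) :=
    fun i ↦ (integrable_eval_gaussianPi a σ i).sub (integrable_const _)
  simp_rw [EuclideanSpace.inner_sub_eq_sum]
  rw [integral_finsetSum _ fun i _ ↦ (hint i).const_mul _]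
  refine sum_eq_zero fun i _ ↦ ?_
  rw [integral_const_mul, integral_sub (integrable_eval_gaussianPi a σ i) (integrable_const _),
    integral_eval_gaussianPi, integral_const, probReal_univ, one_smul, sub_self, mul_zero]

theorem integrable_log_gaussianPiPDF_sub_log_gaussianPiPDF (hσ : σ ≠ 0)
    (a b : EuclideanSpace ℝ (Fin d)) :
    Integrable (fun x ↦ log (gaussianPiPDF a σ x) - log (gaussianPiPDF b σ x))
      (gaussianPi a σ) := by
  simp_rw [log_gaussianPiPDF_sub_log_gaussianPiPDF hσ]
  exact (((integrable_inner_sub_gaussianPi a (a - b) σ).const_mul 2).add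
    (integrable_const _)).div_const _

theorem klDiv_gaussianPi (hσ : σ ≠ 0) (a b : EuclideanSpace ℝ (Fin d)) :
    klDiv (gaussianPi a σ) (gaussianPi b σ) = ENNReal.ofReal (‖a - b‖ ^ 2 / (2 * σ ^ 2)) := by
  have hint := integrable_log_gaussianPiPDF_sub_log_gaussianPiPDF hσ a b
  rw [gaussianPi_eq_withDensity hσ a] at hint
  rw [gaussianPi_eq_withDensity hσ a, gaussianPi_eq_withDensity hσ b,
    klDiv_withDensity_ofReal (measurable_gaussianPiPDF a σ) (measurable_gaussianPiPDF b σ)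
      (gaussianPiPDF_pos hσ a) (gaussianPiPDF_pos hσ b) hint,
    ← gaussianPi_eq_withDensity hσ a]
  simp_rw [log_gaussianPiPDF_sub_log_gaussianPiPDF hσ]
  rw [integral_div, integral_add ((integrable_inner_sub_gaussianPi a (a - b) σ).const_mul 2)
    (integrable_const _), integral_const_mul, integral_inner_sub_gaussianPi, integral_const]
  simp

end GaussianPi

theorem sum_sum_norm_sub_sq {ι E : Type*} [Fintype ι] [NormedAddCommGroup E]
    [InnerProductSpace ℝ E] (x : ι → E) :
    ∑ u, ∑ v, ‖x u - x v‖ ^ 2 = 2 * Fintype.card ι * ∑ u, ‖x u‖ ^ 2 - 2 * ‖∑ u, x u‖ ^ 2 := by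
  simp_rw [norm_sub_sq_real, sum_add_distrib, sum_sub_distrib, ← mul_sum, ← inner_sum,
    ← sum_inner, real_inner_self_eq_norm_sq, sum_const, card_univ, nsmul_eq_mul, ← mul_sum]
  ring

theorem sum_sum_norm_sub_sq_eq_mul_sum_norm_sub_mean_sq {ι E : Type*} [Fintype ι] [Nonempty ι]
    [NormedAddCommGroup E] [InnerProductSpace ℝ E] (x : ι → E) :
    ∑ u, ∑ v, ‖x u - x v‖ ^ 2 =
      2 * Fintype.card ι * ∑ u, ‖x u - (Fintype.card ι : ℝ)⁻¹ • ∑ v, x v‖ ^ 2 := by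
  set m := (Fintype.card ι : ℝ)⁻¹ • ∑ v, x v
  have hcentered : ∑ u, (x u - m) = 0 := by
    rw [sum_sub_distrib, sum_const, card_univ, ← Nat.cast_smul_eq_nsmul ℝ, smul_smul,
      mul_inv_cancel₀ (Nat.cast_ne_zero.mpr Fintype.card_ne_zero), one_smul, sub_self]
  simpa [hcentered] using sum_sum_norm_sub_sq fun u ↦ x u - m

theorem ENNReal.inv_natCast_mul_sum_ofReal {ι : Type*} (s : Finset ι) {n : ℕ} (hn : n ≠ 0)
    {f : ι → ℝ} (hf : ∀ i ∈ s, 0 ≤ f i) :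
    (n : ℝ≥0∞)⁻¹ * ∑ i ∈ s, ENNReal.ofReal (f i) = ENNReal.ofReal ((n : ℝ)⁻¹ * ∑ i ∈ s, f i) := by
  rw [← ENNReal.ofReal_sum_of_nonneg hf, ENNReal.ofReal_mul (by positivity),
    ENNReal.ofReal_inv_of_pos (by positivity), ENNReal.ofReal_natCast]

theorem avg_klDiv_gaussianPi_mixture_le_general (d n : ℕ) (hn : 1 ≤ n) (σ : ℝ) (hσ : 0 < σ)
    (δ : Fin n → EuclideanSpace ℝ (Fin d))
    (δbar : EuclideanSpace ℝ (Fin d)) (hδbar : δbar = (n : ℝ)⁻¹ • ∑ v, δ v) :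
    (n : ℝ≥0∞)⁻¹ * ∑ u, klDiv (gaussianPi (δ u) σ) ((n : ℝ≥0∞)⁻¹ • ∑ v, gaussianPi (δ v) σ) ≤
      ENNReal.ofReal ((1 / σ ^ 2) * ((1 / n) * ∑ u, ‖δ u - δbar‖ ^ 2)) := by
  have hσ₀ : σ ≠ 0 := hσ.ne'
  have hn₀ : n ≠ 0 := Nat.one_le_iff_ne_zero.mp hn
  have : Nonempty (Fin n) := ⟨⟨0, hn⟩⟩
  have hkl : ∀ u, klDiv (gaussianPi (δ u) σ) ((n : ℝ≥0∞)⁻¹ • ∑ v, gaussianPi (δ v) σ) ≤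
      (n : ℝ≥0∞)⁻¹ * ∑ v, ENNReal.ofReal (‖δ u - δ v‖ ^ 2 / (2 * σ ^ 2)) := fun u ↦ by
    simpa [klDiv_gaussianPi hσ₀] using klDiv_mixture_le (Λ := volume)
      (fun v ↦ measurable_gaussianPiPDF (δ v) σ) (fun v ↦ gaussianPiPDF_pos hσ₀ (δ v))
      (fun v ↦ gaussianPi_eq_withDensity hσ₀ (δ v)) u
      (fun v ↦ integrable_log_gaussianPiPDF_sub_log_gaussianPiPDF hσ₀ (δ u) (δ v))
  have hvar := sum_sum_norm_sub_sq_eq_mul_sum_norm_sub_mean_sq δ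
  rw [Fintype.card_fin, ← hδbar] at hvar
  calc (n : ℝ≥0∞)⁻¹ * ∑ u, klDiv (gaussianPi (δ u) σ) ((n : ℝ≥0∞)⁻¹ • ∑ v, gaussianPi (δ v) σ)
      ≤ (n : ℝ≥0∞)⁻¹ * ∑ u, (n : ℝ≥0∞)⁻¹ *
          ∑ v, ENNReal.ofReal (‖δ u - δ v‖ ^ 2 / (2 * σ ^ 2)) := by
        gcongr with u; exact hkl u
    _ = ENNReal.ofReal ((n : ℝ)⁻¹ * ∑ u, (n : ℝ)⁻¹ * ∑ v, ‖δ u - δ v‖ ^ 2 / (2 * σ ^ 2)) := by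
        rw [sum_congr rfl fun u _ ↦ ENNReal.inv_natCast_mul_sum_ofReal _ hn₀ fun v _ ↦
            div_nonneg (sq_nonneg ‖δ u - δ v‖) (by positivity),
          ENNReal.inv_natCast_mul_sum_ofReal _ hn₀ fun u _ ↦ by positivity]
    _ = ENNReal.ofReal ((1 / σ ^ 2) * ((1 / n) * ∑ u, ‖δ u - δbar‖ ^ 2)) := by
        simp_rw [← mul_sum, ← sum_div, hvar]
        field_simp

/-- For Gaussians `P u = N(δ u, σ²I)` with uniform mixture `P̄ = (1/n) ∑ v, P v`, the average
KL divergence `(1/n) ∑ u, KL(P u ‖ P̄)` is at most `(1/σ²) (1/n) ∑ u, ‖δ u - δ̄‖²`, where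
`δ̄ = (1/n) ∑ v, δ v`. -/
theorem avg_klDiv_gaussianPi_mixture_le (d n : ℕ) (hd : 1 ≤ d) (hn : 1 ≤ n) (σ : ℝ) (hσ : 0 < σ)
    (δ : Fin n → EuclideanSpace ℝ (Fin d))
    (δbar : EuclideanSpace ℝ (Fin d)) (hδbar : δbar = (n : ℝ)⁻¹ • ∑ v, δ v) :
    (n : ℝ≥0∞)⁻¹ * ∑ u, klDiv (gaussianPi (δ u) σ) ((n : ℝ≥0∞)⁻¹ • ∑ v, gaussianPi (δ v) σ) ≤
      ENNReal.ofReal ((1 / σ ^ 2) * ((1 / n) * ∑ u, ‖δ u - δbar‖ ^ 2)) :=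
  avg_klDiv_gaussianPi_mixture_le_general d n hn σ hσ δ δbar hδbar
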